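/- arXiv:1012.2040 — 2 statements merged into one kernel-verified Lean document; each statement's English description precedes it below -/
import Mathlib

section
/- Let κ be a regular uncountable cardinal and λ ≥ κ a cardinal. Then I_IS[κ,λ] is a normal ideal on P_κλ: it contains every nonstationary subset of P_κλ, is closed under subsets and finite unions, and whenever D ⊆ P_κλ and g : D → λ is regressive (meaning g(a) ∈ a for every nonempty a ∈ D) with g⁻¹{γ} ∈ I_IS[κ,λ] for every γ < λ, then D ∈ I_IS[κ,λ]. -/
open Cardinal Set

/-! Combinatorial framework: `P_κ λ`, clubs, stationarity, thin/slender lists,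
branches, the principles `TP`, `SP`, `ITP`, `ISP`, the ideals `I_IT`, `I_IS`,
ultrafilter notions, ordinal clubs, and square sequences. -/

/-- `P_κ λ`: the collection of subsets of (the set of ordinals below) `λ` of size `< κ`. -/
def Pk (κ lam : Cardinal.{0}) : Set (Set Ordinal.{0}) :=
  {a | (∀ α ∈ a, α < lam.ord) ∧ #a < Cardinal.lift.{1} κ}

/-- `C` is club in `P_κ X` (represented by `S`, a collection of subsets of `X`):
cofinal in `(S, ⊆)` and closed under unions of `⊆`-increasing chains of length `< κ`. -/
def IsClubIn {X : Type*} (κ : Cardinal.{0}) (S : Set (Set X)) (C : Set (Set X)) : Prop :=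
  C ⊆ S ∧ (∀ a ∈ S, ∃ c ∈ C, a ⊆ c) ∧
    ∀ δ : Ordinal.{0}, 0 < δ → δ.card < κ →
      ∀ f : Ordinal.{0} → Set X, (∀ β < δ, f β ∈ C) →
        (∀ β γ, β ≤ γ → γ < δ → f β ⊆ f γ) →
        (⋃ β ∈ Set.Iio δ, f β) ∈ C

/-- `T` is stationary in `P_κ X`: it meets every club. -/
def IsStatIn {X : Type*} (κ : Cardinal.{0}) (S T : Set (Set X)) : Prop :=
  T ⊆ S ∧ ∀ C, IsClubIn κ S C → (T ∩ C).Nonempty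

/-- A `P_κ λ`-list: `d a ⊆ a` for every `a ∈ P_κ λ`. -/
def IsList (κ lam : Cardinal) (d : Set Ordinal → Set Ordinal) : Prop :=
  ∀ a ∈ Pk κ lam, d a ⊆ a

/-- A thin `P_κ λ`-list: on a club of `c`'s, `|{d_a ∩ c : c ⊆ a ∈ P_κ λ}| < κ`. -/
def IsThin (κ lam : Cardinal) (d : Set Ordinal → Set Ordinal) : Prop :=
  ∃ C, IsClubIn κ (Pk κ lam) C ∧
    ∀ c ∈ C, #{x : Set Ordinal | ∃ a ∈ Pk κ lam, c ⊆ a ∧ x = d a ∩ c} < Cardinal.lift.{1} κ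

/-- `H_θ`: sets hereditarily of cardinality `< θ`. -/
def HSet (θ : Cardinal.{0}) : Set ZFSet.{0} :=
  {x | ZFSet.Hereditarily (fun y => #y.toSet < Cardinal.lift.{1} θ) x}

/-- `x` is the von Neumann ordinal corresponding to the ordinal `α`. -/
def IsOrdZF (x : ZFSet) (α : Ordinal) : Prop :=
  x.IsOrdinal ∧ x.rank = α

/-- The ZFC set `x` codes the set of ordinals `b`. -/
def CodesSet (x : ZFSet) (b : Set Ordinal) : Prop :=
  ∀ y, y ∈ x ↔ ∃ α ∈ b, IsOrdZF y α

/-- `M ∩ λ`: the set of ordinals below `λ` whose von Neumann code lies in `M`. -/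
def ordsOf (lam : Cardinal) (M : Set ZFSet) : Set Ordinal :=
  {α | α < lam.ord ∧ ∃ x ∈ M, IsOrdZF x α}

/-- A slender `P_κ λ`-list: for every sufficiently large regular `θ` there is a club
`C ⊆ P_κ H_θ` such that `d_{M ∩ λ} ∩ b ∈ M` for all `M ∈ C` and all countable `b ∈ M`
with `b ⊆ λ`. -/
def IsSlender (κ lam : Cardinal) (d : Set Ordinal → Set Ordinal) : Prop :=
  ∃ θ₀ : Cardinal, ∀ θ, θ₀ ≤ θ → θ.IsRegular →
    ∃ C, IsClubIn κ {M : Set ZFSet.{0} | M ⊆ HSet θ ∧ #M < Cardinal.lift.{1} κ} C ∧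
      ∀ M ∈ C, ∀ b : Set Ordinal, b.Countable → (∀ α ∈ b, α < lam.ord) →
        (∃ x ∈ M, CodesSet x b) →
        ∃ x ∈ M, CodesSet x (d (ordsOf lam M) ∩ b)

/-- `e` is a cofinal branch of the list `d`. -/
def IsCofBranch (κ lam : Cardinal) (d : Set Ordinal → Set Ordinal) (e : Set Ordinal) : Prop :=
  (∀ α ∈ e, α < lam.ord) ∧
    ∀ a ∈ Pk κ lam, ∃ z ∈ Pk κ lam, a ⊆ z ∧ e ∩ a = d z ∩ a

/-- `e` is an ineffable branch of the list `d`. -/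
def IsIneffBranch (κ lam : Cardinal) (d : Set Ordinal → Set Ordinal) (e : Set Ordinal) : Prop :=
  (∀ α ∈ e, α < lam.ord) ∧
    IsStatIn κ (Pk κ lam) {a ∈ Pk κ lam | e ∩ a = d a}

/-- `TP(κ,λ)`: every thin `P_κ λ`-list has a cofinal branch. -/
def TP (κ lam : Cardinal) : Prop :=
  ∀ d, IsList κ lam d → IsThin κ lam d → ∃ e, IsCofBranch κ lam d e

/-- `SP(κ,λ)`: every slender `P_κ λ`-list has a cofinal branch. -/
def SP (κ lam : Cardinal) : Prop :=
  ∀ d, IsList κ lam d → IsSlender κ lam d → ∃ e, IsCofBranch κ lam d e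

/-- `ITP(κ,λ)`: every thin `P_κ λ`-list has an ineffable branch. -/
def ITP (κ lam : Cardinal) : Prop :=
  ∀ d, IsList κ lam d → IsThin κ lam d → ∃ e, IsIneffBranch κ lam d e

/-- `ISP(κ,λ)`: every slender `P_κ λ`-list has an ineffable branch. -/
def ISP (κ lam : Cardinal) : Prop :=
  ∀ d, IsList κ lam d → IsSlender κ lam d → ∃ e, IsIneffBranch κ lam d e

/-- The list `d` is `A`-effable. -/
def IsEffable (κ lam : Cardinal) (d : Set Ordinal → Set Ordinal) (A : Set (Set Ordinal)) : Prop :=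
  ∀ S, S ⊆ A → IsStatIn κ (Pk κ lam) S →
    ∃ a ∈ S, ∃ b ∈ S, a ⊆ b ∧ d a ≠ d b ∩ a

/-- The ideal `I_IT[κ,λ]`. -/
def IIT (κ lam : Cardinal) : Set (Set (Set Ordinal)) :=
  {A | A ⊆ Pk κ lam ∧ ∃ d, IsList κ lam d ∧ IsThin κ lam d ∧ IsEffable κ lam d A}

/-- The ideal `I_IS[κ,λ]`. -/
def IIS (κ lam : Cardinal) : Set (Set (Set Ordinal)) :=
  {A | A ⊆ Pk κ lam ∧ ∃ d, IsList κ lam d ∧ IsSlender κ lam d ∧ IsEffable κ lam d A}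

/-- The filter `F_IT[κ,λ]` dual to `I_IT[κ,λ]`. -/
def FIT (κ lam : Cardinal) : Set (Set (Set Ordinal)) :=
  {A | A ⊆ Pk κ lam ∧ (Pk κ lam \ A) ∈ IIT κ lam}

/-- `U` is an ultrafilter on the set `X`. -/
def IsUFOn {α : Type*} (X : Set α) (U : Set (Set α)) : Prop :=
  (∀ A ∈ U, A ⊆ X) ∧ X ∈ U ∧ ∅ ∉ U ∧
    (∀ A ∈ U, ∀ B, A ⊆ B → B ⊆ X → B ∈ U) ∧
    (∀ A ∈ U, ∀ B ∈ U, A ∩ B ∈ U) ∧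
    (∀ A, A ⊆ X → (A ∈ U ∨ X \ A ∈ U))

/-- `U` is `κ`-complete: closed under intersections of fewer than `κ` of its members. -/
def KComplete (κ : Cardinal.{0}) (X : Set (Set Ordinal)) (U : Set (Set (Set Ordinal))) : Prop :=
  ∀ s : Set (Set (Set Ordinal)), s ⊆ U → #s < Cardinal.lift.{1} κ → X ∩ ⋂₀ s ∈ U

/-- `U` is fine on `P_κ λ`. -/
def Fine (κ lam : Cardinal) (U : Set (Set (Set Ordinal))) : Prop :=
  ∀ x < lam.ord, {a ∈ Pk κ lam | x ∈ a} ∈ U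

/-- `U` is normal on `P_κ λ`: closed under diagonal intersections. -/
def NormalUF (κ lam : Cardinal) (U : Set (Set (Set Ordinal))) : Prop :=
  ∀ A : Ordinal → Set (Set Ordinal), (∀ x < lam.ord, A x ∈ U) →
    {a ∈ Pk κ lam | ∀ x ∈ a, a ∈ A x} ∈ U

/-- `κ` is strongly compact: for every `λ ≥ κ` there is a `κ`-complete fine
ultrafilter on `P_κ λ`. -/
def IsStronglyCompact (κ : Cardinal) : Prop :=
  ∀ lam : Cardinal, κ ≤ lam →
    ∃ U, IsUFOn (Pk κ lam) U ∧ KComplete κ (Pk κ lam) U ∧ Fine κ lam U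

/-- `κ` is supercompact: for every `λ ≥ κ` there is a `κ`-complete normal fine
ultrafilter on `P_κ λ`. -/
def IsSupercompact (κ : Cardinal) : Prop :=
  ∀ lam : Cardinal, κ ≤ lam →
    ∃ U, IsUFOn (Pk κ lam) U ∧ KComplete κ (Pk κ lam) U ∧ Fine κ lam U ∧ NormalUF κ lam U

/-- `C` is club in the ordinal `o`: unbounded in `o` and closed. -/
def OrdClub (o : Ordinal) (C : Set Ordinal) : Prop :=
  C ⊆ Set.Iio o ∧ (∀ β < o, ∃ γ ∈ C, β ≤ γ) ∧
    ∀ α < o, 0 < α → sSup (C ∩ Set.Iio α) = α → α ∈ C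

/-- `S` is stationary in the ordinal `o`. -/
def OrdStat (o : Ordinal) (S : Set Ordinal) : Prop :=
  S ⊆ Set.Iio o ∧ ∀ C, OrdClub o C → (S ∩ C).Nonempty

/-- `δ` is a limit point of `C`: `δ > 0` and `δ = sup (C ∩ δ)`. -/
def IsLimPt (C : Set Ordinal) (δ : Ordinal) : Prop :=
  0 < δ ∧ sSup (C ∩ Set.Iio δ) = δ

/-- `κ` is an ineffable cardinal. -/
def IsIneffableCard (κ : Cardinal) : Prop :=
  ∀ d : Ordinal → Set Ordinal, (∀ α < κ.ord, d α ⊆ Set.Iio α) →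
    ∃ e ⊆ Set.Iio κ.ord, OrdStat κ.ord {α | α < κ.ord ∧ e ∩ Set.Iio α = d α}

/-- A `□_E(κ,λ)`-sequence. -/
def IsSquareSeq (κ : Cardinal.{0}) (lam : Ordinal.{0}) (E : Set Ordinal.{0})
    (𝒞 : Ordinal.{0} → Set (Set Ordinal.{0})) : Prop :=
  (∀ α, Order.IsSuccLimit α → α ∈ E → α < lam →
    ((𝒞 α).Nonempty ∧ #(𝒞 α) < Cardinal.lift.{1} κ) ∧
      ∀ C ∈ 𝒞 α, OrdClub α C ∧ ∀ β, IsLimPt C β → β ∈ E → C ∩ Set.Iio β ∈ 𝒞 β) ∧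
  ¬∃ D, OrdClub lam D ∧ ∀ δ, IsLimPt D δ → δ ∈ E → δ < lam → D ∩ Set.Iio δ ∈ 𝒞 δ

/-- `□_E(κ,λ)` holds. -/
def SquareE (κ : Cardinal.{0}) (lam : Ordinal.{0}) (E : Set Ordinal.{0}) : Prop :=
  ∃ 𝒞, IsSquareSeq κ lam E 𝒞

/-- `(a, ∈) ≺ (λ, ∈)`: `a` is an elementary substructure of the ordinals below `lam`
(with `∈`, equivalently the order, as the only relation). -/
def ElemSubOrd (lam : Ordinal) (a : Set Ordinal) : Prop :=
  letI := FirstOrder.Language.orderStructure ↥a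
  letI := FirstOrder.Language.orderStructure ↥(Set.Iio lam)
  ∃ h : a ⊆ Set.Iio lam,
    ∀ (n : ℕ) (φ : FirstOrder.Language.order.Formula (Fin n)) (v : Fin n → ↥a),
      φ.Realize v ↔ φ.Realize fun i => Set.inclusion h (v i)

/-- `P'_κ λ`: the members `a` of `P_κ λ` with `a ∩ κ` an ordinal and `(a,∈) ≺ (λ,∈)`. -/
def P'k (κ lam : Cardinal) : Set (Set Ordinal) :=
  {a ∈ Pk κ lam | (∃ β : Ordinal, a ∩ Set.Iio κ.ord = Set.Iio β) ∧ ElemSubOrd lam.ord a}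

/-- `κ_a`: the ordinal `a ∩ κ` (for `a ∈ P'_κ λ`). -/
noncomputable def kapOf (κ : Cardinal) (a : Set Ordinal) : Ordinal :=
  sInf {β : Ordinal | a ∩ Set.Iio κ.ord ⊆ Set.Iio β}


/-! Each closure property is proved by gluing lists. On `A ∪ B` take the list of `A` on `A` and
that of `B` elsewhere; for normality take `a ↦ d^{g a}_a`, where `d^γ` witnesses that the fibre of
`γ` lies in the ideal. The glued list is slender on the intersection, resp. the diagonal
intersection, of the clubs witnessing slenderness of the pieces. It is effable because a
stationary subset of `A ∪ B` meets `A` or `B` in a stationary set, and a stationary subset of `D`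
has, by the pressing-down lemma, a stationary fibre of `g`; there the glued list agrees with an
effable one. -/

-- `Pk κ lam` and the domain `P_κ H_θ` of the clubs in `IsSlender` are both `smallSubsets` by `rfl`.
def smallSubsets {X : Type 1} (κ : Cardinal.{0}) (Y : Set X) : Set (Set X) :=
  {a | a ⊆ Y ∧ #a < Cardinal.lift.{1} κ}

section Club

variable {X : Type 1} {κ : Cardinal.{0}} {S C D : Set (Set X)}

theorem isClubIn_smallSubsets (hreg : κ.IsRegular) (Y : Set X) :
    IsClubIn κ (smallSubsets κ Y) (smallSubsets κ Y) := by
  refine ⟨subset_rfl, fun a ha => ⟨a, ha, subset_rfl⟩, fun δ _ hδ f hf _ => ⟨?_, ?_⟩⟩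
  · exact iUnion₂_subset fun β hβ => (hf β hβ).1
  · rw [biUnion_eq_iUnion]
    refine (Cardinal.card_iUnion_lt_iff_forall_of_isRegular hreg.lift ?_).2 fun β => (hf β β.2).2
    rw [Cardinal.mk_Iio_ordinal]
    exact Cardinal.lift_lt.2 hδ

theorem isClubIn_setOf_mem (hreg : κ.IsRegular) {Y : Set X} {x : X} (hx : x ∈ Y) :
    IsClubIn κ (smallSubsets κ Y) {a ∈ smallSubsets κ Y | x ∈ a} := by
  have hinf := aleph0_le_lift.2 hreg.aleph0_le
  refine ⟨fun a ha => ha.1, fun a ha => ?_, fun δ h0 hδ f hf hmono => ⟨?_, ?_⟩⟩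
  · refine ⟨insert x a, ⟨⟨insert_subset hx ha.1, ?_⟩, mem_insert x a⟩, subset_insert x a⟩
    exact Cardinal.mk_insert_le.trans_lt
      (Cardinal.add_lt_of_lt hinf ha.2 (one_lt_aleph0.trans_le hinf))
  · exact (isClubIn_smallSubsets hreg Y).2.2 δ h0 hδ f (fun β hβ => (hf β hβ).1) hmono
  · exact mem_biUnion h0 (hf 0 h0).2

theorem IsClubIn.iUnion_nat_mem (hunc : ℵ₀ < κ) (hC : IsClubIn κ S C) {s : ℕ → Set X}
    (hs : Monotone s) (hsC : ∀ n, s n ∈ C) : ⋃ n, s n ∈ C := by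
  set f : Ordinal.{0} → Set X := fun β => ⋃ (n : ℕ) (_ : (n : Ordinal) ≤ β), s n
  have hf_nat : ∀ n : ℕ, f n = s n := fun n => subset_antisymm
    (iUnion₂_subset fun m hm => hs (Nat.cast_le.1 hm))
    (subset_iUnion₂_of_subset n le_rfl subset_rfl)
  have hf_union : ⋃ β ∈ Iio Ordinal.omega0, f β = ⋃ n, s n := subset_antisymm
    (iUnion₂_subset fun β _ => iUnion₂_subset fun n _ => subset_iUnion s n)
    (iUnion_subset fun n => hf_nat n ▸ subset_biUnion_of_mem (u := f) (Ordinal.natCast_lt_omega0 n))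
  rw [← hf_union]
  refine hC.2.2 Ordinal.omega0 Ordinal.omega0_pos (by rwa [Ordinal.card_omega0]) f (fun β hβ => ?_)
    fun β γ hβγ _ => iUnion₂_mono' fun n hn => ⟨n, hn.trans hβγ, subset_rfl⟩
  obtain ⟨n, rfl⟩ := Ordinal.lt_omega0.1 hβ
  exact hf_nat n ▸ hsC n

theorem IsClubIn.iUnion_mem_of_interleave (hunc : ℵ₀ < κ) (hC : IsClubIn κ S C)
    {s : ℕ → Set X} (hs : Monotone s) {N : ℕ}
    (h : ∀ n ≥ N, ∃ c ∈ C, s n ⊆ c ∧ c ⊆ s (n + 1)) : ⋃ n, s n ∈ C := by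
  choose! c hcC hsc hcs using h
  have hc_mono : Monotone fun k => c (N + k) := monotone_nat_of_le_succ fun k =>
    (hcs (N + k) (by omega)).trans (hsc (N + k + 1) (by omega))
  have hc_union : ⋃ k, c (N + k) = ⋃ n, s n := subset_antisymm
    (iUnion_subset fun k => (hcs _ (by omega)).trans (subset_iUnion s _))
    (iUnion_subset fun n => (hs (by omega : n ≤ N + n)).trans
      ((hsc _ (by omega)).trans (subset_iUnion (fun k => c (N + k)) n)))
  rw [← hc_union]
  exact hC.iUnion_nat_mem hunc hc_mono fun k => hcC _ (by omega)

theorem IsClubIn.biUnion_mem_of_tail (hC : IsClubIn κ S C) {δ β₀ : Ordinal.{0}} (hβ₀ : β₀ < δ)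
    (hδ : δ.card < κ) {f : Ordinal.{0} → Set X} (hf : ∀ β, β₀ ≤ β → β < δ → f β ∈ C)
    (hmono : ∀ β γ, β ≤ γ → γ < δ → f β ⊆ f γ) : ⋃ β ∈ Iio δ, f β ∈ C := by
  have htail : ⋃ β ∈ Iio δ, f (max β β₀) = ⋃ β ∈ Iio δ, f β := subset_antisymm
    (iUnion₂_subset fun β hβ => subset_biUnion_of_mem (u := f) (max_lt hβ hβ₀))
    (iUnion₂_mono fun β hβ => hmono _ _ (le_max_left _ _) (max_lt hβ hβ₀))
  rw [← htail]
  exact hC.2.2 δ (pos_of_gt hβ₀) hδ _ (fun β hβ => hf _ (le_max_right _ _) (max_lt hβ hβ₀))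
    fun β γ hβγ hγ => hmono _ _ (max_le_max hβγ le_rfl) (max_lt hγ hβ₀)

theorem IsClubIn.inter (hunc : ℵ₀ < κ) (hC : IsClubIn κ S C) (hD : IsClubIn κ S D) :
    IsClubIn κ S (C ∩ D) := by
  refine ⟨fun a ha => hC.1 ha.1, fun a ha => ?_, fun δ h0 hδ f hf hmono =>
    ⟨hC.2.2 δ h0 hδ f (fun β hβ => (hf β hβ).1) hmono,
      hD.2.2 δ h0 hδ f (fun β hβ => (hf β hβ).2) hmono⟩⟩
  choose! p hpC hp using hC.2.1
  choose! q hqD hq using hD.2.1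
  set s : ℕ → Set X := fun n => (q ∘ p)^[n] a
  have hs_succ : ∀ n, s (n + 1) = q (p (s n)) := fun n => Function.iterate_succ_apply' _ _ _
  have hsS : ∀ n, s n ∈ S := fun n =>
    MapsTo.iterate (fun t ht => hD.1 (hqD _ (hC.1 (hpC t ht)))) n ha
  have hs_p : ∀ n, s n ⊆ p (s n) ∧ p (s n) ⊆ s (n + 1) := fun n =>
    ⟨hp _ (hsS n), hs_succ n ▸ hq _ (hC.1 (hpC _ (hsS n)))⟩
  have hs : Monotone s := monotone_nat_of_le_succ fun n => (hs_p n).1.trans (hs_p n).2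
  refine ⟨⋃ n, s n, ⟨?_, ?_⟩, subset_iUnion s 0⟩
  · exact hC.iUnion_mem_of_interleave hunc hs (N := 0) fun n _ =>
      ⟨p (s n), hpC _ (hsS n), hs_p n⟩
  · exact hD.iUnion_mem_of_interleave hunc hs (N := 0) fun n _ =>
      ⟨s (n + 1), hs_succ n ▸ hqD _ (hC.1 (hpC _ (hsS n))), hs n.le_succ, subset_rfl⟩

theorem isClubIn_diagInter (hreg : κ.IsRegular) (hunc : ℵ₀ < κ) {Y : Set X} {ι : Type 1}
    {C : ι → Set (Set X)} (hC : ∀ γ, IsClubIn κ (smallSubsets κ Y) (C γ))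
    {e : Set X → Set ι} (he_mono : Monotone e)
    (he_sUnion : ∀ s : Set (Set X), e (⋃₀ s) ⊆ ⋃ a ∈ s, e a)
    (he_card : ∀ a ∈ smallSubsets κ Y, #(e a) < Cardinal.lift.{1} κ) :
    IsClubIn κ (smallSubsets κ Y) {a ∈ smallSubsets κ Y | ∀ γ ∈ e a, a ∈ C γ} := by
  have hY := isClubIn_smallSubsets hreg Y
  refine ⟨fun a ha => ha.1, fun a ha => ?_, fun δ h0 hδ f hf hmono =>
    ⟨hY.2.2 δ h0 hδ f (fun β hβ => (hf β hβ).1) hmono, fun γ hγ => ?_⟩⟩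
  · choose! p hpC hp using fun γ => (hC γ).2.1
    set step : Set X → Set X := fun t => t ∪ ⋃ γ ∈ e t, p γ t
    have hstep : MapsTo step (smallSubsets κ Y) (smallSubsets κ Y) := by
      intro t ht
      have hp_small : ∀ γ ∈ e t, p γ t ∈ smallSubsets κ Y := fun γ _ => (hC γ).1 (hpC γ t ht)
      refine ⟨union_subset ht.1 (iUnion₂_subset fun γ hγ => (hp_small γ hγ).1), ?_⟩
      refine (Cardinal.mk_union_le _ _).trans_lt (Cardinal.add_lt_of_lt
        (aleph0_le_lift.2 hreg.aleph0_le) ht.2 ?_)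
      exact (Cardinal.card_biUnion_lt_iff_forall_of_isRegular hreg.lift (he_card t ht)).2
        fun γ hγ => (hp_small γ hγ).2
    set s : ℕ → Set X := fun n => step^[n] a
    have hs_succ : ∀ n, s (n + 1) = step (s n) := fun n => Function.iterate_succ_apply' _ _ _
    have hsY : ∀ n, s n ∈ smallSubsets κ Y := fun n => hstep.iterate n ha
    have hs : Monotone s := monotone_nat_of_le_succ fun n => hs_succ n ▸ subset_union_left
    refine ⟨⋃ n, s n, ⟨hY.iUnion_nat_mem hunc hs hsY, fun γ hγ => ?_⟩, subset_iUnion s 0⟩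
    obtain ⟨_, ⟨N, rfl⟩, hγN⟩ := mem_iUnion₂.1 (he_sUnion _ (by rwa [sUnion_range]))
    refine (hC γ).iUnion_mem_of_interleave hunc hs (N := N) fun n hn =>
      ⟨p γ (s n), hpC γ _ (hsY n), hp γ _ (hsY n), hs_succ n ▸ ?_⟩
    exact subset_union_of_subset_right
      (subset_biUnion_of_mem (u := fun γ => p γ (s n)) (he_mono (hs hn) hγN)) _
  · obtain ⟨_, ⟨β₀, hβ₀, rfl⟩, hγ₀⟩ := mem_iUnion₂.1 (he_sUnion _ (by rwa [sUnion_image]))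
    exact (hC γ).biUnion_mem_of_tail hβ₀ hδ
      (fun β hβ₀β hβ => (hf β hβ).2 γ (he_mono (hmono _ _ hβ₀β hβ) hγ₀)) hmono

end Club

section Stationary

variable {X : Type 1} {κ : Cardinal.{0}} {S C T : Set (Set X)}

theorem IsStatIn.mono {T' : Set (Set X)} (hT : IsStatIn κ S T) (hTT' : T ⊆ T') (hT'S : T' ⊆ S) :
    IsStatIn κ S T' :=
  ⟨hT'S, fun C hC => (hT.2 C hC).mono (inter_subset_inter_left C hTT')⟩

theorem exists_isClubIn_disjoint_of_not_isStatIn (hTS : T ⊆ S) (hT : ¬IsStatIn κ S T) :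
    ∃ C, IsClubIn κ S C ∧ Disjoint T C := by
  simpa [IsStatIn, hTS, not_nonempty_iff_eq_empty, ← disjoint_iff_inter_eq_empty] using hT

theorem IsStatIn.inter_isClubIn (hunc : ℵ₀ < κ) (hT : IsStatIn κ S T) (hC : IsClubIn κ S C) :
    IsStatIn κ S (T ∩ C) :=
  ⟨inter_subset_left.trans hT.1, fun D hD => by
    simpa only [inter_assoc] using hT.2 _ (hC.inter hunc hD)⟩

theorem IsStatIn.inter_or_diff (hunc : ℵ₀ < κ) (hT : IsStatIn κ S T) (A : Set (Set X)) :
    IsStatIn κ S (T ∩ A) ∨ IsStatIn κ S (T \ A) := by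
  refine or_iff_not_imp_left.2 fun hTA => ?_
  obtain ⟨C, hC, hdisj⟩ :=
    exists_isClubIn_disjoint_of_not_isStatIn (inter_subset_left.trans hT.1) hTA
  exact (hT.inter_isClubIn hunc hC).mono
    (fun a ha => ⟨ha.1, fun haA => disjoint_left.1 hdisj ⟨ha.1, haA⟩ ha.2⟩)
    (sdiff_subset.trans hT.1)

theorem IsStatIn.nonempty (hreg : κ.IsRegular) {Y : Set X} (hT : IsStatIn κ (smallSubsets κ Y) T) :
    T.Nonempty :=
  (hT.2 _ (isClubIn_smallSubsets hreg Y)).mono inter_subset_left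

theorem IsStatIn.exists_isStatIn_fiber (hreg : κ.IsRegular) (hunc : ℵ₀ < κ) {Y : Set X}
    (hS : IsStatIn κ (smallSubsets κ Y) S) {g : Set X → X} (hg : ∀ a ∈ S, g a ∈ a) :
    ∃ x, IsStatIn κ (smallSubsets κ Y) {a ∈ S | g a = x} := by
  by_contra! h
  choose E hE hdisj using fun x =>
    exists_isClubIn_disjoint_of_not_isStatIn (fun a ha => hS.1 ha.1) (h x)
  obtain ⟨a, haS, -, haE⟩ := hS.2 _ (isClubIn_diagInter hreg hunc hE (e := id) monotone_id
    (fun s => by simp only [id, sUnion_eq_biUnion, subset_rfl]) fun a ha => ha.2)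
  exact disjoint_left.1 (hdisj (g a)) ⟨haS, rfl⟩ (haE _ (hg a haS))

end Stationary

theorem ordsOf_mono (lam : Cardinal) : Monotone (ordsOf lam) :=
  fun _ _ hMN _ ⟨hα, x, hx, hxα⟩ => ⟨hα, x, hMN hx, hxα⟩

theorem ordsOf_sUnion_subset (lam : Cardinal) (s : Set (Set ZFSet)) :
    ordsOf lam (⋃₀ s) ⊆ ⋃ M ∈ s, ordsOf lam M :=
  fun _ ⟨hα, x, ⟨_, hM, hxM⟩, hxα⟩ => mem_biUnion hM ⟨hα, x, hxM, hxα⟩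

theorem mk_ordsOf_le (lam : Cardinal) (M : Set ZFSet) : #(ordsOf lam M) ≤ #M :=
  have hsub : ordsOf lam M ⊆ ZFSet.rank '' M := fun _ ⟨_, x, hx, hxα⟩ => ⟨x, hx, hxα.2⟩
  (Cardinal.mk_le_mk_of_subset hsub).trans Cardinal.mk_image_le

theorem empty_mem_HSet {θ : Cardinal.{0}} (hθ : θ ≠ 0) : ∅ ∈ HSet θ := by
  refine ZFSet.hereditarily_iff.2 ⟨?_, fun y hy => absurd hy (ZFSet.notMem_empty y)⟩
  have h_empty : (∅ : ZFSet).toSet = ∅ := eq_empty_of_forall_notMem ZFSet.notMem_empty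
  rw [h_empty, Cardinal.mk_eq_zero, pos_iff_ne_zero, Ne, Cardinal.lift_eq_zero]
  exact hθ

theorem codesSet_empty : CodesSet ∅ ∅ :=
  fun y => iff_of_false (ZFSet.notMem_empty y) fun ⟨_, h, _⟩ => h

def SlenderAt (lam : Cardinal.{0}) (d : Set Ordinal → Set Ordinal) (M : Set ZFSet.{0}) : Prop :=
  ∀ b : Set Ordinal, b.Countable → (∀ α ∈ b, α < lam.ord) → (∃ x ∈ M, CodesSet x b) →
    ∃ x ∈ M, CodesSet x (d (ordsOf lam M) ∩ b)

section Slender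

variable {κ lam : Cardinal.{0}} {d d₁ d₂ : Set Ordinal → Set Ordinal} {M : Set ZFSet.{0}}

theorem isSlender_iff : IsSlender κ lam d ↔ ∃ θ₀ : Cardinal, ∀ θ, θ₀ ≤ θ → θ.IsRegular →
    ∃ C, IsClubIn κ (smallSubsets κ (HSet θ)) C ∧ ∀ M ∈ C, SlenderAt lam d M :=
  Iff.rfl

theorem SlenderAt.congr (h : SlenderAt lam d₁ M) (hd : d₁ (ordsOf lam M) = d₂ (ordsOf lam M)) :
    SlenderAt lam d₂ M :=
  fun b hb hb_lt hbM => hd ▸ h b hb hb_lt hbM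

theorem slenderAt_of_eq_empty (hd : d (ordsOf lam M) = ∅) (hM : ∅ ∈ M) : SlenderAt lam d M :=
  fun _ _ _ _ => ⟨∅, hM, by rw [hd, empty_inter]; exact codesSet_empty⟩

theorem isSlender_const_empty (hreg : κ.IsRegular) : IsSlender κ lam fun _ => ∅ :=
  isSlender_iff.2 ⟨0, fun _ _ hθ => ⟨_, isClubIn_setOf_mem hreg (empty_mem_HSet hθ.pos.ne'),
    fun _ hM => slenderAt_of_eq_empty rfl hM.2⟩⟩

theorem IsSlender.ite (hunc : ℵ₀ < κ) (h₁ : IsSlender κ lam d₁) (h₂ : IsSlender κ lam d₂)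
    (p : Set Ordinal → Prop) [DecidablePred p] :
    IsSlender κ lam fun a => if p a then d₁ a else d₂ a := by
  obtain ⟨θ₁, h₁⟩ := isSlender_iff.1 h₁
  obtain ⟨θ₂, h₂⟩ := isSlender_iff.1 h₂
  refine isSlender_iff.2 ⟨max θ₁ θ₂, fun θ hθ hθreg => ?_⟩
  obtain ⟨C₁, hC₁, hd₁⟩ := h₁ θ (le_of_max_le_left hθ) hθreg
  obtain ⟨C₂, hC₂, hd₂⟩ := h₂ θ (le_of_max_le_right hθ) hθreg
  refine ⟨C₁ ∩ C₂, hC₁.inter hunc hC₂, fun M hM => ?_⟩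
  by_cases h : p (ordsOf lam M)
  · exact (hd₁ M hM.1).congr (if_pos h).symm
  · exact (hd₂ M hM.2).congr (if_neg h).symm

end Slender

section Effable

variable {κ lam : Cardinal.{0}} {d d' d₁ d₂ : Set Ordinal → Set Ordinal}
  {A B : Set (Set Ordinal)}

theorem IsEffable.mono (h : IsEffable κ lam d A) (hBA : B ⊆ A) : IsEffable κ lam d B :=
  fun S hSB => h S (hSB.trans hBA)

theorem IsEffable.congr (h : IsEffable κ lam d A) (hd : EqOn d d' A) : IsEffable κ lam d' A := by
  intro S hSA hS
  obtain ⟨a, ha, b, hb, hab, hne⟩ := h S hSA hS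
  exact ⟨a, ha, b, hb, hab, by rwa [← hd (hSA ha), ← hd (hSA hb)]⟩

theorem IsEffable.union_ite (hunc : ℵ₀ < κ) (h₁ : IsEffable κ lam d₁ A)
    (h₂ : IsEffable κ lam d₂ B) [DecidablePred (· ∈ A)] :
    IsEffable κ lam (fun a => if a ∈ A then d₁ a else d₂ a) (A ∪ B) := by
  intro S hS hstat
  rcases hstat.inter_or_diff hunc A with hSA | hSA
  · obtain ⟨a, ha, b, hb, hab, hne⟩ := ((h₁.mono inter_subset_right).congr
      fun a ha => (if_pos ha.2).symm) _ subset_rfl hSA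
    exact ⟨a, ha.1, b, hb.1, hab, hne⟩
  · obtain ⟨a, ha, b, hb, hab, hne⟩ := ((h₂.mono fun a ha => (hS ha.1).resolve_left ha.2).congr
      fun a ha => (if_neg ha.2).symm) _ subset_rfl hSA
    exact ⟨a, ha.1, b, hb.1, hab, hne⟩

end Effable

open Classical in
noncomputable def diagList (g : Set Ordinal → Ordinal) (dd : Ordinal → Set Ordinal → Set Ordinal)
    (a : Set Ordinal) : Set Ordinal :=
  if g a ∈ a then dd (g a) a else ∅

section DiagList

variable {κ lam : Cardinal.{0}} {g : Set Ordinal → Ordinal}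
  {dd : Ordinal → Set Ordinal → Set Ordinal}

theorem diagList_of_mem {a : Set Ordinal} (h : g a ∈ a) : diagList g dd a = dd (g a) a :=
  if_pos h

theorem isList_diagList (hdd : ∀ γ < lam.ord, IsList κ lam (dd γ)) :
    IsList κ lam (diagList g dd) := by
  intro a ha
  by_cases h : g a ∈ a
  · exact diagList_of_mem h ▸ hdd _ (ha.1 _ h) a ha
  · exact (if_neg h).trans_subset (empty_subset a)

theorem isSlender_diagList (hreg : κ.IsRegular) (hunc : ℵ₀ < κ)
    (hdd : ∀ γ < lam.ord, IsSlender κ lam (dd γ)) : IsSlender κ lam (diagList g dd) := by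
  choose! θf hθf using fun γ hγ => isSlender_iff.1 (hdd γ hγ)
  obtain ⟨θ₀, hθ₀⟩ := Cardinal.bddAbove_of_small (s := Set.range fun γ : Iio lam.ord => θf γ)
  refine isSlender_iff.2 ⟨θ₀, fun θ hθ hθreg => ?_⟩
  have hclubs : ∀ γ, ∃ C, IsClubIn κ (smallSubsets κ (HSet θ)) C ∧
      (γ < lam.ord → ∀ M ∈ C, SlenderAt lam (dd γ) M) := fun γ =>
    if hγ : γ < lam.ord then
      (hθf γ hγ θ ((hθ₀ ⟨⟨γ, hγ⟩, rfl⟩).trans hθ) hθreg).imp fun _ hC => ⟨hC.1, fun _ => hC.2⟩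
    else ⟨_, isClubIn_smallSubsets hreg _, fun h => absurd h hγ⟩
  choose C hC hCd using hclubs
  have hdiag := isClubIn_diagInter hreg hunc hC (ordsOf_mono lam) (ordsOf_sUnion_subset lam)
    fun M hM => (mk_ordsOf_le lam M).trans_lt hM.2
  refine ⟨_, hdiag.inter hunc (isClubIn_setOf_mem hreg (empty_mem_HSet hθreg.pos.ne')), ?_⟩
  rintro M ⟨⟨-, hMC⟩, -, hM_empty⟩
  by_cases h : g (ordsOf lam M) ∈ ordsOf lam M
  · exact (hCd _ h.1 M (hMC _ h)).congr (diagList_of_mem h).symm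
  · exact slenderAt_of_eq_empty (if_neg h) hM_empty

theorem isEffable_diagList (hreg : κ.IsRegular) (hunc : ℵ₀ < κ) (hlam : lam ≠ 0)
    {D : Set (Set Ordinal)} (hg : ∀ a ∈ D, a.Nonempty → g a ∈ a)
    (hdd : ∀ γ < lam.ord, IsEffable κ lam (dd γ) {a ∈ D | g a = γ}) :
    IsEffable κ lam (diagList g dd) D := by
  intro S hSD hS
  have h0 : (0 : Ordinal) < lam.ord := Cardinal.ord_pos.2 (pos_iff_ne_zero.2 hlam)
  have hS_ne : IsStatIn κ (Pk κ lam) {a ∈ S | a.Nonempty} :=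
    (hS.inter_isClubIn hunc (isClubIn_setOf_mem hreg h0)).mono
      (fun a ha => ⟨ha.1, 0, ha.2.2⟩) fun a ha => hS.1 ha.1
  have hg_S : ∀ a ∈ {a ∈ S | a.Nonempty}, g a ∈ a := fun a ha => hg a (hSD ha.1) ha.2
  obtain ⟨γ, hγS⟩ := hS_ne.exists_isStatIn_fiber hreg hunc hg_S
  obtain ⟨a₀, ha₀, rfl⟩ := hγS.nonempty hreg
  have heq : EqOn (dd (g a₀)) (diagList g dd) {a ∈ {a ∈ S | a.Nonempty} | g a = g a₀} :=
    fun a ha => by rw [diagList_of_mem (hg_S a ha.1), ha.2]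
  obtain ⟨a, ha, b, hb, hab, hne⟩ := ((hdd _ ((hS.1 ha₀.1).1 _ (hg_S a₀ ha₀))).mono
    fun a ha => ⟨hSD ha.1.1, ha.2⟩).congr heq _ subset_rfl hγS
  exact ⟨a, ha.1.1, b, hb.1.1, hab, hne⟩

end DiagList

section IIS

variable {κ lam : Cardinal.{0}} {A B : Set (Set Ordinal)}

theorem mem_IIS_of_not_isStatIn (hreg : κ.IsRegular) (hA : A ⊆ Pk κ lam)
    (hns : ¬IsStatIn κ (Pk κ lam) A) : A ∈ IIS κ lam :=
  ⟨hA, fun _ => ∅, fun a _ => empty_subset a, isSlender_const_empty hreg,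
    fun _ hSA hS => absurd (hS.mono hSA hA) hns⟩

theorem mem_IIS_of_subset (hA : A ∈ IIS κ lam) (hBA : B ⊆ A) : B ∈ IIS κ lam :=
  let ⟨hA, d, hl, hs, he⟩ := hA
  ⟨hBA.trans hA, d, hl, hs, he.mono hBA⟩

theorem union_mem_IIS (hunc : ℵ₀ < κ) (hA : A ∈ IIS κ lam) (hB : B ∈ IIS κ lam) :
    A ∪ B ∈ IIS κ lam := by
  classical
  obtain ⟨hA, d₁, hl₁, hs₁, he₁⟩ := hA
  obtain ⟨hB, d₂, hl₂, hs₂, he₂⟩ := hB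
  refine ⟨union_subset hA hB, fun a => if a ∈ A then d₁ a else d₂ a, fun a ha => ?_,
    hs₁.ite hunc hs₂ (· ∈ A), he₁.union_ite hunc he₂⟩
  dsimp only
  split_ifs
  exacts [hl₁ a ha, hl₂ a ha]

theorem mem_IIS_of_regressive (hreg : κ.IsRegular) (hunc : ℵ₀ < κ) (hlam : lam ≠ 0)
    {D : Set (Set Ordinal)} (hD : D ⊆ Pk κ lam) {g : Set Ordinal → Ordinal}
    (hg : ∀ a ∈ D, a.Nonempty → g a ∈ a)
    (hfib : ∀ γ < lam.ord, {a ∈ D | g a = γ} ∈ IIS κ lam) : D ∈ IIS κ lam := by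
  choose! dd hl hs he using fun γ hγ => (hfib γ hγ).2
  exact ⟨hD, diagList g dd, isList_diagList hl, isSlender_diagList hreg hunc hs,
    isEffable_diagList hreg hunc hlam hg he⟩

end IIS

theorem IIS_normal_ideal (κ lam : Cardinal.{0})
    (hreg : κ.IsRegular) (hunc : ℵ₀ < κ) (hle : κ ≤ lam) :
    (∀ A, A ⊆ Pk κ lam → ¬ IsStatIn κ (Pk κ lam) A → A ∈ IIS κ lam) ∧
    (∀ A ∈ IIS κ lam, ∀ B, B ⊆ A → B ∈ IIS κ lam) ∧
    (∀ A ∈ IIS κ lam, ∀ B ∈ IIS κ lam, A ∪ B ∈ IIS κ lam) ∧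
    (∀ D, D ⊆ Pk κ lam → ∀ g : Set Ordinal → Ordinal,
      (∀ a ∈ D, a.Nonempty → g a ∈ a) →
      (∀ γ < lam.ord, {a ∈ D | g a = γ} ∈ IIS κ lam) →
      D ∈ IIS κ lam) := by
  have hlam : lam ≠ 0 := ((aleph0_pos.trans hunc).trans_le hle).ne'
  exact ⟨fun _ hA hns => mem_IIS_of_not_isStatIn hreg hA hns,
    fun _ hA _ hBA => mem_IIS_of_subset hA hBA,
    fun _ hA _ hB => union_mem_IIS hunc hA hB,
    fun _ hD _ hg hfib => mem_IIS_of_regressive hreg hunc hlam hD hg hfib⟩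
end

section
/- Let κ be an inaccessible cardinal, λ ≥ κ a cardinal, and g : P_κλ → P_κλ any function. Then {a ∈ P'_κλ : for every z ⊆ a with |z| < κ_a, g(z) ⊆ a} ∈ F_IT[κ,λ]. -/
open Cardinal Set

/-!
Let `d_a` be a witness `z ⊆ a`, `|z| < κ_a`, with `g z ⊄ a`, whenever there is one. Every
list is thin since `κ` is a strong limit. If `d` were coherent on a stationary set `S` of
non-closed `a`, restrict to the `a ∈ S` with `a ∩ κ` an ordinal and `a` Skolem-closed, hence
in `P'_κ λ`; there the `d_a` are the traces `e ∩ a` of the single set `e = ⋃ d_a`. If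
`|e| ≥ κ`, some such `a` is closed under an enumeration of `e` of length `κ`, which gives
`κ_a ≤ |e ∩ a| = |d_a| < κ_a`. So `e ∈ P_κ λ`, and an `a` containing `e ∪ g e` has `d_a = e`
and `g d_a ⊆ a`, a contradiction.
-/

open FirstOrder Language

lemma biUnion_Iio_omega0 {α : Type*} (u : ℕ → Set α) :
    ⋃ β ∈ Iio Ordinal.omega0, u (toNat β.card) = ⋃ n, u n := by
  ext x
  simp only [mem_iUnion, mem_Iio, exists_prop]
  constructor
  · rintro ⟨β, -, hx⟩
    exact ⟨_, hx⟩
  · rintro ⟨n, hx⟩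
    exact ⟨n, Ordinal.natCast_lt_omega0 n, by simpa using hx⟩

lemma monotoneOn_Iio_omega0 {α : Type*} {u : ℕ → Set α} (hu : Monotone u) :
    MonotoneOn (fun β => u (toNat β.card)) (Iio Ordinal.omega0) := by
  intro β hβ γ hγ hβγ
  obtain ⟨m, rfl⟩ := Ordinal.lt_omega0.1 hβ
  obtain ⟨n, rfl⟩ := Ordinal.lt_omega0.1 hγ
  simpa using hu (by exact_mod_cast hβγ)

lemma IsClubIn.biUnion_mem {X : Type*} {κ : Cardinal.{0}} {S C : Set (Set X)}
    (hC : IsClubIn κ S C) {δ : Ordinal.{0}} (hδ : 0 < δ) (hδκ : δ.card < κ)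
    {u : Ordinal.{0} → Set X} (hu : MonotoneOn u (Iio δ)) (hmem : ∀ β < δ, u β ∈ C) :
    ⋃ β ∈ Iio δ, u β ∈ C :=
  hC.2.2 δ hδ hδκ u hmem fun _ _ hβγ hγ => hu (hβγ.trans_lt hγ) hγ hβγ

lemma IsClubIn.iUnion_mem {X : Type*} {κ : Cardinal.{0}} {S C : Set (Set X)}
    (hC : IsClubIn κ S C) (hκ : ℵ₀ < κ) {u : ℕ → Set X} (hu : Monotone u)
    (hmem : ∀ n, u n ∈ C) : ⋃ n, u n ∈ C := by
  rw [← biUnion_Iio_omega0]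
  exact hC.biUnion_mem Ordinal.omega0_pos (by simpa using hκ) (monotoneOn_Iio_omega0 hu)
    fun β _ => hmem _

variable {κ lam : Cardinal.{0}}

lemma union_mem_Pk (hκ : ℵ₀ ≤ κ) {a b : Set Ordinal} (ha : a ∈ Pk κ lam)
    (hb : b ∈ Pk κ lam) : a ∪ b ∈ Pk κ lam :=
  ⟨fun α hα => hα.elim (ha.1 α) (hb.1 α),
    (mk_union_le a b).trans_lt (add_lt_of_lt (by simpa using hκ) ha.2 hb.2)⟩

lemma biUnion_mem_Pk (hκ : κ.IsRegular) {δ : Ordinal.{0}} (hδ : δ.card < κ)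
    {u : Ordinal → Set Ordinal} (hu : ∀ β < δ, u β ∈ Pk κ lam) :
    ⋃ β ∈ Iio δ, u β ∈ Pk κ lam := by
  refine ⟨fun α hα => ?_, (card_biUnion_lt_iff_forall_of_isRegular hκ.lift ?_).2
    fun β hβ => (hu β hβ).2⟩
  · obtain ⟨β, hβ, hα⟩ := mem_iUnion₂.1 hα
    exact (hu β hβ).1 α hα
  · rwa [Cardinal.mk_Iio_ordinal, lift_lt]

lemma isClubIn_Pk (hκ : κ.IsRegular) : IsClubIn κ (Pk κ lam) (Pk κ lam) :=
  ⟨subset_rfl, fun a ha => ⟨a, ha, subset_rfl⟩,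
    fun _ _ hδ _ hu _ => biUnion_mem_Pk hκ hδ hu⟩

theorem Cardinal.IsInaccessible.isThin (hκ : κ.IsInaccessible)
    (d : Set Ordinal → Set Ordinal) : IsThin κ lam d := by
  refine ⟨Pk κ lam, isClubIn_Pk hκ.isRegular, fun c hc => ?_⟩
  have hsub : {x | ∃ a ∈ Pk κ lam, c ⊆ a ∧ x = d a ∩ c} ⊆ 𝒫 c := by
    rintro x ⟨a, -, -, rfl⟩
    exact inter_subset_right
  refine (mk_le_mk_of_subset hsub).trans_lt ?_
  obtain ⟨μ, hμ, hcμ⟩ := lt_lift_iff.1 hc.2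
  rw [mk_powerset, ← hcμ, ← lift_two_power]
  exact lift_lt.2 (hκ.isStrongLimit.isStrongPrelimit hμ)

/-- Operators whose closure points form a club in `P_κ λ`. All clubs below arise this way, so
intersecting clubs becomes taking the pointwise union `F ⊔ G` of operators. -/
structure IsSmallContinuous (κ lam : Cardinal.{0}) (F : Set Ordinal.{0} → Set Ordinal.{0}) :
    Prop where
  mem_Pk : ∀ x ∈ Pk κ lam, F x ∈ Pk κ lam
  subset_biUnion : ∀ δ : Ordinal.{0}, 0 < δ → ∀ u : Ordinal.{0} → Set Ordinal.{0},
    MonotoneOn u (Iio δ) → F (⋃ β ∈ Iio δ, u β) ⊆ ⋃ β ∈ Iio δ, F (u β)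

namespace IsSmallContinuous

variable {F G : Set Ordinal.{0} → Set Ordinal.{0}}

theorem isClubIn_closurePoints (hF : IsSmallContinuous κ lam F) (hκ : κ.IsRegular)
    (hκω : ℵ₀ < κ) : IsClubIn κ (Pk κ lam) {x ∈ Pk κ lam | F x ⊆ x} := by
  refine ⟨fun x hx => hx.1, fun a ha => ?_, fun δ hδ hδκ u hu hmono => ?_⟩
  · set u : ℕ → Set Ordinal := fun n => (fun x => x ∪ F x)^[n] a
    have hu : Monotone u := monotone_nat_of_le_succ fun n => by
      simp only [u, Function.iterate_succ_apply']
      exact subset_union_left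
    have huPk : ∀ n, u n ∈ Pk κ lam := fun n => by
      induction n with
      | zero => exact ha
      | succ n ih =>
        simp only [u, Function.iterate_succ_apply']
        exact union_mem_Pk hκ.aleph0_le ih (hF.mem_Pk _ ih)
    refine ⟨⋃ n, u n, ⟨(isClubIn_Pk hκ).iUnion_mem hκω hu huPk, ?_⟩, subset_iUnion u 0⟩
    calc F (⋃ n, u n) ⊆ ⋃ β ∈ Iio Ordinal.omega0, F (u (toNat β.card)) := by
          rw [← biUnion_Iio_omega0]
          exact hF.subset_biUnion _ Ordinal.omega0_pos _ (monotoneOn_Iio_omega0 hu)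
      _ = ⋃ n, F (u n) := biUnion_Iio_omega0 (F ∘ u)
      _ ⊆ ⋃ n, u n := iUnion_subset fun n => by
          refine subset_trans ?_ (subset_iUnion u (n + 1))
          simp only [u, Function.iterate_succ_apply']
          exact subset_union_right
  · refine ⟨biUnion_mem_Pk hκ hδκ fun β hβ => (hu β hβ).1, ?_⟩
    refine (hF.subset_biUnion δ hδ u fun β hβ γ hγ hβγ => hmono β γ hβγ hγ).trans ?_
    exact iUnion₂_mono fun β hβ => (hu β hβ).2

theorem sup (hκ : ℵ₀ ≤ κ) (hF : IsSmallContinuous κ lam F)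
    (hG : IsSmallContinuous κ lam G) : IsSmallContinuous κ lam (F ⊔ G) where
  mem_Pk x hx := union_mem_Pk hκ (hF.mem_Pk x hx) (hG.mem_Pk x hx)
  subset_biUnion δ hδ u hu := union_subset
    ((hF.subset_biUnion δ hδ u hu).trans (iUnion₂_mono fun _ _ => subset_union_left))
    ((hG.subset_biUnion δ hδ u hu).trans (iUnion₂_mono fun _ _ => subset_union_right))

end IsSmallContinuous

theorem IsStatIn.exists_mem_subset {S : Set (Set Ordinal)} {F : Set Ordinal → Set Ordinal}
    (hS : IsStatIn κ (Pk κ lam) S) (hκ : κ.IsRegular) (hκω : ℵ₀ < κ)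
    (hF : IsSmallContinuous κ lam F) : ∃ a ∈ S, F a ⊆ a :=
  let ⟨a, haS, _, ha⟩ := hS.2 _ (hF.isClubIn_closurePoints hκ hκω)
  ⟨a, haS, ha⟩

theorem isSmallContinuous_const {w : Set Ordinal} (hw : w ∈ Pk κ lam) :
    IsSmallContinuous κ lam (fun _ => w) where
  mem_Pk _ _ := hw
  subset_biUnion _ hδ _ _ := subset_biUnion_of_mem (u := fun _ => w) (mem_Iio.2 hδ)

theorem isSmallContinuous_image {f : Ordinal → Ordinal}
    (hf : MapsTo f (Iio κ.ord) (Iio lam.ord)) :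
    IsSmallContinuous κ lam (fun x => f '' (x ∩ Iio κ.ord)) where
  mem_Pk x hx := ⟨fun _ ⟨_, hα, hfα⟩ => hfα ▸ hf hα.2,
    mk_image_le.trans_lt ((mk_le_mk_of_subset inter_subset_left).trans_lt hx.2)⟩
  subset_biUnion _ _ _ _ := by
    rw [iUnion₂_inter, image_iUnion₂]

/-- Its closure points `x` are those for which `x ∩ κ` is an initial segment of `κ`. -/
def traceOp (κ : Cardinal.{0}) (x : Set Ordinal.{0}) : Set Ordinal.{0} :=
  ⋃ γ ∈ x ∩ Iio κ.ord, Iio γ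

theorem isSmallContinuous_traceOp (hκ : κ.IsRegular) :
    IsSmallContinuous κ lam (traceOp κ) where
  mem_Pk x hx := by
    refine ⟨fun α hα => ?_, (card_biUnion_lt_iff_forall_of_isRegular hκ.lift
      ((mk_le_mk_of_subset inter_subset_left).trans_lt hx.2)).2 fun γ hγ => ?_⟩
    · obtain ⟨γ, hγ, hαγ⟩ := mem_iUnion₂.1 hα
      exact (mem_Iio.1 hαγ).trans (hx.1 γ hγ.1)
    · rw [Cardinal.mk_Iio_ordinal, lift_lt]
      exact lt_ord.1 hγ.2
  subset_biUnion _ _ u _ := by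
    intro α hα
    obtain ⟨γ, ⟨hγu, hγκ⟩, hαγ⟩ := mem_iUnion₂.1 hα
    obtain ⟨β, hβ, hγβ⟩ := mem_iUnion₂.1 hγu
    exact mem_biUnion hβ (mem_biUnion ⟨hγβ, hγκ⟩ hαγ)

lemma kapOf_eq {x : Set Ordinal} {β : Ordinal} (h : x ∩ Iio κ.ord = Iio β) :
    kapOf κ x = β := by
  simp only [kapOf, h, Iio_subset_Iio_iff]
  exact csInf_Ici

lemma inter_Iio_eq_Iio_kapOf {x : Set Ordinal} (h : traceOp κ x ⊆ x) :
    x ∩ Iio κ.ord = Iio (kapOf κ x) := by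
  have hlower : IsLowerSet (x ∩ Iio κ.ord) := fun α γ hαγ hγ => by
    rcases hαγ.lt_or_eq with hlt | rfl
    · exact ⟨h (mem_biUnion hγ hlt), hlt.trans hγ.2⟩
    · exact hγ
  obtain hx | ⟨β, hβ⟩ := hlower.eq_univ_or_Iio
  · exact (lt_irrefl κ.ord (hx.symm ▸ mem_univ κ.ord : κ.ord ∈ x ∩ Iio κ.ord).2).elim
  · rw [hβ, kapOf_eq hβ]

lemma lift_card_kapOf_le {e : Set Ordinal} {f : Ordinal → Ordinal} {x : Set Ordinal}
    (hfe : MapsTo f (Iio κ.ord) e) (hf : InjOn f (Iio κ.ord))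
    (htr : traceOp κ x ⊆ x) (hfx : f '' (x ∩ Iio κ.ord) ⊆ x) :
    lift.{1} (kapOf κ x).card ≤ #(e ∩ x : Set Ordinal) := by
  have hIio := inter_Iio_eq_Iio_kapOf htr
  have hsub : Iio (kapOf κ x) ⊆ Iio κ.ord := hIio ▸ inter_subset_right
  rw [← Cardinal.mk_Iio_ordinal, ← mk_image_eq_of_injOn f _ (hf.mono hsub)]
  refine mk_le_mk_of_subset fun _ ⟨α, hα, hfα⟩ => hfα ▸ ⟨hfe (hsub hα), hfx ?_⟩
  exact ⟨α, hIio ▸ hα, rfl⟩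

section Skolem

variable (lam) [Nonempty (Iio lam.ord)]

/-- The hull of `x ∩ λ` in `(λ, <)` under the Skolem functions of `skolem₁`. One round of
Skolem functions suffices: a set closed under them is already elementary (Tarski–Vaught). -/
noncomputable def skolemHull (x : Set Ordinal.{0}) : Set Ordinal.{0} :=
  letI := Language.orderStructure (Iio lam.ord)
  Subtype.val '' (Substructure.closure (Language.order.sum Language.order.skolem₁)
    (Subtype.val ⁻¹' x : Set (Iio lam.ord)) : Set (Iio lam.ord))

variable {lam}

theorem isSmallContinuous_skolemHull (hκ : ℵ₀ < κ) :
    IsSmallContinuous κ lam (skolemHull lam) where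
  mem_Pk x hx := by
    let := Language.orderStructure (Iio lam.ord)
    refine ⟨fun _ ⟨m, _, hm⟩ => hm ▸ m.2, ?_⟩
    rw [skolemHull, mk_image_eq Subtype.val_injective]
    have hκ' : ℵ₀ < lift.{1} κ := by simpa using hκ
    have hcl := Substructure.lift_card_closure_le
      (L := Language.order.sum Language.order.skolem₁)
      (s := (Subtype.val ⁻¹' x : Set (Iio lam.ord)))
    rw [lift_uzero] at hcl
    refine hcl.trans_lt (max_lt hκ' ?_)
    refine add_lt_of_lt hκ'.le ?_ (lt_of_le_of_lt ?_ hκ')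
    · simpa using (mk_preimage_of_injective _ _ Subtype.val_injective).trans_lt hx.2
    · have hfun := card_functions_sum_skolem₁_le (L := Language.order)
      rw [Language.order.card_eq_one, max_eq_left one_le_aleph0] at hfun
      exact (lift_le.2 hfun).trans_eq lift_aleph0
  subset_biUnion δ hδ u hu := by
    let := Language.orderStructure (Iio lam.ord)
    have : Nonempty (Iio δ) := ⟨⟨0, hδ⟩⟩
    rintro _ ⟨m, hm, rfl⟩
    rw [preimage_iUnion₂, biUnion_eq_iUnion, Substructure.closure_iUnion,
      SetLike.mem_coe, Substructure.mem_iSup_of_directed] at hm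
    · obtain ⟨⟨β, hβ⟩, hmβ⟩ := hm
      exact mem_biUnion hβ ⟨m, hmβ, rfl⟩
    · exact Monotone.directed_le fun β γ hβγ =>
        Substructure.closure_mono (preimage_mono (hu β.2 γ.2 hβγ))

theorem elemSubOrd_of_skolemHull_subset {x : Set Ordinal} (hx : ∀ α ∈ x, α < lam.ord)
    (h : skolemHull lam x ⊆ x) : ElemSubOrd lam.ord x := by
  let := Language.orderStructure (Iio lam.ord)
  let := Language.orderStructure x
  have : Language.order.OrderedStructure (Iio lam.ord) := ⟨fun _ => Iff.rfl⟩
  have : Language.order.OrderedStructure x := ⟨fun _ => Iff.rfl⟩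
  set S := Substructure.closure (Language.order.sum Language.order.skolem₁)
    (Subtype.val ⁻¹' x : Set (Iio lam.ord))
  set R := LHom.sumInl.substructureReduct S
  have hmem : ∀ m : Iio lam.ord, m ∈ R ↔ (m : Ordinal) ∈ x := fun m =>
    ⟨fun hm => h ⟨m, hm, rfl⟩, fun hm => Substructure.subset_closure hm⟩
  -- `x` and `R` are the same set of ordinals, so they satisfy the same formulas.
  let e : x ≃o R :=
    { toFun := fun a => ⟨⟨a, hx a a.2⟩, (hmem _).2 a.2⟩
      invFun := fun b => ⟨b.1, (hmem _).1 b.2⟩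
      left_inv := fun _ => rfl
      right_inv := fun _ => rfl
      map_rel_iff' := Iff.rfl }
  refine ⟨hx, fun n φ v => ?_⟩
  rw [← StrongHomClass.realize_formula e φ]
  exact (Substructure.skolem₁_reduct_isElementary S φ (e ∘ v)).symm

theorem mem_P'k_of_closed {a : Set Ordinal} (ha : a ∈ Pk κ lam)
    (h : (traceOp κ ⊔ skolemHull lam) a ⊆ a) : a ∈ P'k κ lam :=
  ⟨ha, ⟨_, inter_Iio_eq_Iio_kapOf (le_sup_left.trans h)⟩,
    elemSubOrd_of_skolemHull_subset ha.1 (le_sup_right.trans h)⟩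

end Skolem

lemma biUnion_inter_eq_of_directedOn {α : Type*} {T : Set (Set α)} {d : Set α → Set α}
    (hd : ∀ a ∈ T, d a ⊆ a) (hT : DirectedOn (· ⊆ ·) T)
    (hcoh : ∀ a ∈ T, ∀ b ∈ T, a ⊆ b → d a = d b ∩ a) {a : Set α} (ha : a ∈ T) :
    (⋃ b ∈ T, d b) ∩ a = d a := by
  refine Subset.antisymm (fun x ⟨hxe, hxa⟩ => ?_)
    fun x hx => ⟨mem_biUnion ha hx, hd a ha hx⟩
  obtain ⟨b, hb, hxb⟩ := mem_iUnion₂.1 hxe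
  obtain ⟨c, hc, hac, hbc⟩ := hT a ha b hb
  rw [hcoh b hb c hc hbc] at hxb
  rw [hcoh a ha c hc hac]
  exact ⟨hxb.1, hxa⟩

def FailsClosure (κ : Cardinal.{0}) (g : Set Ordinal.{0} → Set Ordinal.{0})
    (a : Set Ordinal.{0}) : Prop :=
  ∃ z ⊆ a, #z < lift.{1} (kapOf κ a).card ∧ ¬ g z ⊆ a

open Classical in
noncomputable def failureWitness (κ : Cardinal.{0}) (g : Set Ordinal.{0} → Set Ordinal.{0})
    (a : Set Ordinal.{0}) : Set Ordinal.{0} :=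
  if h : FailsClosure κ g a then h.choose else ∅

variable {g : Set Ordinal.{0} → Set Ordinal.{0}}

lemma failureWitness_subset {a : Set Ordinal} : failureWitness κ g a ⊆ a := by
  unfold failureWitness
  split_ifs with h
  exacts [h.choose_spec.1, empty_subset a]

lemma failureWitness_spec {a : Set Ordinal} (h : FailsClosure κ g a) :
    #(failureWitness κ g a) < lift.{1} (kapOf κ a).card ∧
      ¬ g (failureWitness κ g a) ⊆ a := by
  rw [failureWitness, dif_pos h]
  exact h.choose_spec.2

lemma mk_lt_of_forall_exists_mk_inter_lt {e : Set Ordinal} (he : e ⊆ Iio lam.ord)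
    (h : ∀ G, IsSmallContinuous κ lam G →
      ∃ a, traceOp κ a ⊆ a ∧ G a ⊆ a ∧
        #(e ∩ a : Set Ordinal) < lift.{1} (kapOf κ a).card) :
    #e < lift.{1} κ := by
  by_contra! hbig
  rw [← card_ord κ, ← Cardinal.mk_Iio_ordinal] at hbig
  obtain ⟨ι⟩ := hbig
  classical
  set f : Ordinal → Ordinal := fun α => if hα : α < κ.ord then ι ⟨α, hα⟩ else 0
  have hfe : MapsTo f (Iio κ.ord) e := fun α hα => by simp [f, mem_Iio.1 hα]
  have hf : InjOn f (Iio κ.ord) := fun α hα β hβ hαβ => by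
    have := ι.injective (Subtype.ext (by simpa [f, mem_Iio.1 hα, mem_Iio.1 hβ] using hαβ))
    exact congrArg Subtype.val this
  obtain ⟨a, htr, hfa, hlt⟩ := h _ (isSmallContinuous_image (hfe.mono_right he))
  exact (lift_card_kapOf_le hfe hf htr hfa).not_gt hlt

theorem exists_ne_failureWitness_inter (hκ : ℵ₀ ≤ κ)
    (hg : ∀ a ∈ Pk κ lam, g a ∈ Pk κ lam) {T : Set (Set Ordinal)} (hTPk : T ⊆ Pk κ lam)
    (hT : ∀ G, IsSmallContinuous κ lam G → ∃ a ∈ T, G a ⊆ a)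
    (htr : ∀ a ∈ T, traceOp κ a ⊆ a) (hfail : ∀ a ∈ T, FailsClosure κ g a) :
    ∃ a ∈ T, ∃ b ∈ T, a ⊆ b ∧
      failureWitness κ g a ≠ failureWitness κ g b ∩ a := by
  by_contra! hcoh
  set e := ⋃ a ∈ T, failureWitness κ g a
  have hdir : DirectedOn (· ⊆ ·) T := fun a ha b hb => by
    obtain ⟨c, hc, hab⟩ :=
      hT _ (isSmallContinuous_const (union_mem_Pk hκ (hTPk ha) (hTPk hb)))
    exact ⟨c, hc, union_subset_iff.1 hab⟩
  have heT : ∀ a ∈ T, e ∩ a = failureWitness κ g a := fun a ha =>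
    biUnion_inter_eq_of_directedOn (fun _ _ => failureWitness_subset) hdir hcoh ha
  have hePk : e ∈ Pk κ lam := by
    have he : e ⊆ Iio lam.ord := iUnion₂_subset fun a ha =>
      failureWitness_subset.trans fun α hα => (hTPk ha).1 α hα
    refine ⟨he, mk_lt_of_forall_exists_mk_inter_lt he fun G hG => ?_⟩
    obtain ⟨a, ha, hGa⟩ := hT G hG
    refine ⟨a, htr a ha, hGa, ?_⟩
    rw [heT a ha]
    exact (failureWitness_spec (hfail a ha)).1
  -- Closure fails at `a` exactly at the set `e = failureWitness κ g a`, yet `g e ⊆ a`.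
  obtain ⟨a, ha, hega⟩ := hT _ (isSmallContinuous_const (union_mem_Pk hκ hePk (hg e hePk)))
  have hwa : failureWitness κ g a = e := by
    rw [← heT a ha, inter_eq_left]
    exact subset_union_left.trans hega
  exact (failureWitness_spec (hfail a ha)).2 (hwa ▸ subset_union_right.trans hega)

theorem isEffable_failureWitness (hκ : κ.IsInaccessible) (h0 : 0 < lam.ord)
    (hg : ∀ a ∈ Pk κ lam, g a ∈ Pk κ lam) {B : Set (Set Ordinal)}
    (hB : ∀ a ∈ B, a ∈ P'k κ lam → FailsClosure κ g a) :
    IsEffable κ lam (failureWitness κ g) B := by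
  intro S hSB hS
  have : Nonempty (Iio lam.ord) := ⟨⟨0, h0⟩⟩
  have hω := hκ.aleph0_lt
  have hF₀ : IsSmallContinuous κ lam (traceOp κ ⊔ skolemHull lam) :=
    (isSmallContinuous_traceOp hκ.isRegular).sup hω.le (isSmallContinuous_skolemHull hω)
  set T := {a ∈ S | (traceOp κ ⊔ skolemHull lam) a ⊆ a}
  have hT : ∀ G, IsSmallContinuous κ lam G → ∃ a ∈ T, G a ⊆ a := fun G hG => by
    obtain ⟨a, haS, ha⟩ := hS.exists_mem_subset hκ.isRegular hω (hF₀.sup hω.le hG)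
    exact ⟨a, ⟨haS, le_sup_left.trans ha⟩, le_sup_right.trans ha⟩
  have hTPk : T ⊆ Pk κ lam := fun a ha => hS.1 ha.1
  obtain ⟨a, ha, b, hb, hab, hne⟩ := exists_ne_failureWitness_inter hω.le hg hTPk hT
    (fun a ha => le_sup_left.trans ha.2)
    (fun a ha => hB a (hSB ha.1) (mem_P'k_of_closed (hTPk ha) ha.2))
  exact ⟨a, ha.1, b, hb.1, hab, hne⟩

theorem closure_under_g_in_FIT (κ lam : Cardinal.{0})
    (hκ : κ.IsInaccessible) (hle : κ ≤ lam)
    (g : Set Ordinal → Set Ordinal) (hg : ∀ a ∈ Pk κ lam, g a ∈ Pk κ lam) :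
    {a ∈ P'k κ lam |
        ∀ z, z ⊆ a → #z < Cardinal.lift.{1} (kapOf κ a).card → g z ⊆ a} ∈
      FIT κ lam := by
  have h0 : (0 : Ordinal) < lam.ord := ord_pos.2 (hκ.pos.trans_le hle)
  refine ⟨fun a ha => ha.1.1, sdiff_subset, failureWitness κ g,
    fun _ _ => failureWitness_subset, hκ.isThin _, isEffable_failureWitness hκ h0 hg ?_⟩
  intro a ha haP'
  by_contra hclosed
  exact ha.2 ⟨haP', fun z hz hz' => not_not.1 fun hgz => hclosed ⟨z, hz, hz', hgz⟩⟩
end
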